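/- Let z ∈ ℂⁿ with unit-modulus entries, W Hermitian, C = zz* + σW, and m ∈ [n]. Let W^{(m)} be W with its m-th row and column zeroed, C^{(m)} = zz* + σW^{(m)}, and let x̃^{(m)} be a leading eigenvector of C^{(m)} with ‖x̃^{(m)}‖₂ = √n. If n > σ‖W^{(m)}‖₂, then the m-th entry satisfies |x̃^{(m)}ₘ| ≤ n / (n - σ‖W^{(m)}‖₂). -/

import Mathlib

/-! Since the `m`-th row of `W⁽ᵐ⁾` vanishes, the `m`-th entry of `C⁽ᵐ⁾ x̃ = λ x̃` reads
`λ x̃ₘ = (z*x̃) zₘ`, so `λ |x̃ₘ| ≤ ‖z‖₂ ‖x̃‖₂ = n` by Cauchy–Schwarz. On the other hand `λ`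
dominates every eigenvalue of the Hermitian matrix `C⁽ᵐ⁾`, so `λ • 1 - C⁽ᵐ⁾` is positive
semidefinite and `λ n ≥ z* C⁽ᵐ⁾ z = n² + σ z* W⁽ᵐ⁾ z ≥ n² - σ n ‖W⁽ᵐ⁾‖₂`. -/

noncomputable section

namespace PhaseSync

open Complex

variable {n : ℕ}

/-- Euclidean (ℓ²) norm on `Fin n → ℂ`. -/
def l2norm (v : Fin n → ℂ) : ℝ :=
  Real.sqrt (∑ k, ‖v k‖ ^ 2)

/-- Entrywise sup (ℓ∞) norm on `Fin n → ℂ`. -/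
def linfnorm (v : Fin n → ℂ) : ℝ :=
  ⨆ k, ‖v k‖

/-- Hermitian inner product `x*y = ∑ₖ conj(xₖ) yₖ`. -/
def herm (x y : Fin n → ℂ) : ℂ :=
  ∑ k, (starRingEnd ℂ) (x k) * y k

/-- Distance up to a global phase: `d₂(x,y) = inf_θ ‖x e^{iθ} - y‖₂`. -/
def d2 (x y : Fin n → ℂ) : ℝ :=
  ⨅ θ : ℝ, l2norm (fun k => Complex.exp (θ * Complex.I) * x k - y k)

/-- Sup-norm distance up to a global phase. -/
def dinf (x y : Fin n → ℂ) : ℝ :=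
  ⨅ θ : ℝ, linfnorm (fun k => Complex.exp (θ * Complex.I) * x k - y k)

/-- ℓ² operator (spectral) norm of a matrix. -/
def opNorm (A : Matrix (Fin n) (Fin n) ℂ) : ℝ :=
  ⨆ u : {u : Fin n → ℂ // l2norm u = 1}, l2norm (A.mulVec u)

/-- Entrywise projection to the unit circle (on nonzero entries). -/
def proj (v : Fin n → ℂ) : Fin n → ℂ :=
  fun k => v k / (‖v k‖ : ℂ)

/-- The rank-one matrix `z z*`. -/
def outer (z : Fin n → ℂ) : Matrix (Fin n) (Fin n) ℂ :=
  Matrix.of fun i j => z i * (starRingEnd ℂ) (z j)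

/-- The operator `ℒ v = (z*v/n) z + (σ/n) W v`. -/
def Lop (z : Fin n → ℂ) (σ : ℝ) (W : Matrix (Fin n) (Fin n) ℂ) (v : Fin n → ℂ) : Fin n → ℂ :=
  (herm z v / (n : ℂ)) • z + (σ / (n : ℝ)) • W.mulVec v

end PhaseSync

open Matrix

open scoped ComplexOrder in
theorem Matrix.IsHermitian.re_dotProduct_mulVec_le {ι 𝕜 : Type*} [Fintype ι] [DecidableEq ι]
    [RCLike 𝕜] {C : Matrix ι ι 𝕜} (hC : C.IsHermitian) {lam : ℝ}
    (hlam : ∀ ν : ℝ, (∃ v, v ≠ 0 ∧ C *ᵥ v = (ν : 𝕜) • v) → ν ≤ lam) (x : ι → 𝕜) :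
    RCLike.re (star x ⬝ᵥ C *ᵥ x) ≤ lam * RCLike.re (star x ⬝ᵥ x) := by
  have hA : (lam • 1 - C).IsHermitian :=
    ((IsSelfAdjoint.all lam).smul (IsSelfAdjoint.one _)).sub hC
  have hpsd : (lam • 1 - C).PosSemidef := by
    rw [hA.posSemidef_iff_eigenvalues_nonneg]
    intro i
    have hv0 : ⇑(hA.eigenvectorBasis i) ≠ 0 := by
      simpa using hA.eigenvectorBasis.orthonormal.ne_zero i
    have hCv : C *ᵥ ⇑(hA.eigenvectorBasis i)
        = ((lam - hA.eigenvalues i : ℝ) : 𝕜) • ⇑(hA.eigenvectorBasis i) := by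
      have hv := hA.mulVec_eigenvectorBasis i
      rw [sub_mulVec, smul_mulVec, one_mulVec] at hv
      rw [RCLike.ofReal_sub, sub_smul, ← RCLike.real_smul_eq_coe_smul,
        ← RCLike.real_smul_eq_coe_smul, ← hv]
      abel
    exact (sub_le_self_iff lam).mp (hlam _ ⟨_, hv0, hCv⟩)
  have hnonneg := hpsd.re_dotProduct_nonneg x
  rw [sub_mulVec, smul_mulVec, one_mulVec, dotProduct_sub, dotProduct_smul, map_sub,
    RCLike.smul_re] at hnonneg
  linarith

theorem Matrix.IsHermitian.of_apply_eq_ite {ι α : Type*} [DecidableEq ι] [AddMonoid α]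
    [StarAddMonoid α] {W W' : Matrix ι ι α} (hW : W.IsHermitian) {m : ι}
    (hW' : ∀ i j, W' i j = if i = m ∨ j = m then 0 else W i j) : W'.IsHermitian := by
  ext i j
  simp only [conjTranspose_apply, hW', or_comm (a := j = m)]
  split_ifs <;> simp [hW.apply]

namespace PhaseSync

lemma l2norm_eq_norm_toLp (v : Fin n → ℂ) : l2norm v = ‖WithLp.toLp 2 v‖ := by
  simp [l2norm, EuclideanSpace.norm_eq]

lemma herm_eq_star_dotProduct (x y : Fin n → ℂ) : herm x y = star x ⬝ᵥ y := rfl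

lemma norm_herm_le (x y : Fin n → ℂ) : ‖herm x y‖ ≤ l2norm x * l2norm y := by
  rw [l2norm_eq_norm_toLp, l2norm_eq_norm_toLp, herm_eq_star_dotProduct, dotProduct_comm,
    ← EuclideanSpace.inner_toLp_toLp]
  exact norm_inner_le_norm _ _

lemma l2norm_smul (c : ℂ) (v : Fin n → ℂ) : l2norm (c • v) = ‖c‖ * l2norm v := by
  simp only [l2norm_eq_norm_toLp, WithLp.toLp_smul, norm_smul]

lemma l2norm_nonneg (v : Fin n → ℂ) : 0 ≤ l2norm v := Real.sqrt_nonneg _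

lemma l2norm_mulVec_le (A : Matrix (Fin n) (Fin n) ℂ) (v : Fin n → ℂ) :
    l2norm (A *ᵥ v) ≤ opNorm A * l2norm v := by
  have hbdd : BddAbove (Set.range fun u : {u : Fin n → ℂ // l2norm u = 1} => l2norm (A *ᵥ u)) :=
    ⟨‖toEuclideanCLM (n := Fin n) (𝕜 := ℂ) A‖, by
      rintro _ ⟨u, rfl⟩
      have h := (toEuclideanCLM (n := Fin n) (𝕜 := ℂ) A).le_opNorm (WithLp.toLp 2 u.1)
      rwa [toEuclideanCLM_toLp, ← l2norm_eq_norm_toLp, ← l2norm_eq_norm_toLp, u.2,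
        mul_one] at h⟩
  rcases eq_or_ne (l2norm v) 0 with hv | hv
  · rw [l2norm_eq_norm_toLp, norm_eq_zero, WithLp.toLp_eq_zero] at hv
    simp [hv, l2norm]
  · have hc : ‖((l2norm v)⁻¹ : ℂ)‖ = (l2norm v)⁻¹ := by
      rw [norm_inv, Complex.norm_of_nonneg (l2norm_nonneg v)]
    have hu : l2norm (((l2norm v)⁻¹ : ℂ) • v) = 1 := by
      rw [l2norm_smul, hc, inv_mul_cancel₀ hv]
    have h := le_ciSup hbdd ⟨_, hu⟩
    rwa [mulVec_smul, l2norm_smul, hc, inv_mul_le_iff₀ ((l2norm_nonneg v).lt_of_ne' hv),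
      mul_comm] at h

lemma herm_self_of_norm_eq_one {z : Fin n → ℂ} (hz : ∀ k, ‖z k‖ = 1) : herm z z = n := by
  simp [herm, Complex.conj_mul', hz]

lemma l2norm_of_norm_eq_one {z : Fin n → ℂ} (hz : ∀ k, ‖z k‖ = 1) : l2norm z = √n := by
  simp [l2norm, hz]

lemma outer_mulVec (z v : Fin n → ℂ) : outer z *ᵥ v = herm z v • z := by
  ext i
  simp only [outer, mulVec, dotProduct, of_apply, Pi.smul_apply, smul_eq_mul, herm,
    Finset.sum_mul]
  exact Finset.sum_congr rfl fun j _ => by ring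

lemma isHermitian_outer (z : Fin n → ℂ) : (outer z).IsHermitian := by
  ext i j
  simp [outer, mul_comm]

lemma sub_mul_opNorm_le_of_forall_eigenvalue_le (hn : 0 < n) {z : Fin n → ℂ}
    (hz : ∀ k, ‖z k‖ = 1) {σ : ℝ} (hσ : 0 ≤ σ) {W : Matrix (Fin n) (Fin n) ℂ}
    (hW : W.IsHermitian) {lam : ℝ}
    (hlam : ∀ ν : ℝ, (∃ v : Fin n → ℂ, v ≠ 0 ∧ (outer z + σ • W) *ᵥ v = (ν : ℂ) • v) →
      ν ≤ lam) :
    n - σ * opNorm W ≤ lam := by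
  have hC : (outer z + σ • W).IsHermitian :=
    (isHermitian_outer z).add ((IsSelfAdjoint.all σ).smul hW)
  have hray := hC.re_dotProduct_mulVec_le hlam z
  have hCz : star z ⬝ᵥ (outer z + σ • W) *ᵥ z = n * n + σ * herm z (W *ᵥ z) := by
    rw [add_mulVec, outer_mulVec, smul_mulVec, dotProduct_add, dotProduct_smul,
      dotProduct_smul, ← herm_eq_star_dotProduct, herm_self_of_norm_eq_one hz, smul_eq_mul,
      Complex.real_smul, herm_eq_star_dotProduct]
  have hWz : ‖herm z (W *ᵥ z)‖ ≤ n * opNorm W :=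
    calc ‖herm z (W *ᵥ z)‖ ≤ l2norm z * l2norm (W *ᵥ z) := norm_herm_le _ _
      _ ≤ l2norm z * (opNorm W * l2norm z) :=
        mul_le_mul_of_nonneg_left (l2norm_mulVec_le W z) (l2norm_nonneg z)
      _ = n * opNorm W := by
        rw [l2norm_of_norm_eq_one hz, mul_left_comm, Real.mul_self_sqrt n.cast_nonneg, mul_comm]
  rw [hCz, ← herm_eq_star_dotProduct, herm_self_of_norm_eq_one hz] at hray
  simp only [RCLike.re_to_complex, Complex.add_re, Complex.mul_re, Complex.natCast_re,
    Complex.natCast_im, Complex.ofReal_re, Complex.ofReal_im, mul_zero, sub_zero, zero_mul,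
    RCLike.natCast_re] at hray
  have hre : -(n * opNorm W) ≤ (herm z (W *ᵥ z)).re :=
    neg_le_of_abs_le ((Complex.abs_re_le_norm _).trans hWz)
  have hnpos : (0 : ℝ) < n := by exact_mod_cast hn
  refine le_of_mul_le_mul_left ?_ hnpos
  linarith [mul_le_mul_of_nonneg_left hre hσ]

lemma mul_apply_eq_herm_mul_of_row_eq_zero {z : Fin n → ℂ} {σ : ℝ}
    {W : Matrix (Fin n) (Fin n) ℂ} {m : Fin n} (hrow : ∀ j, W m j = 0) {x : Fin n → ℂ}
    {lam : ℂ} (h : (outer z + σ • W) *ᵥ x = lam • x) : lam * x m = herm z x * z m := by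
  have hWx : (W *ᵥ x) m = 0 := by simp [mulVec, dotProduct, hrow]
  have hm := congrFun h m
  rw [add_mulVec, outer_mulVec, smul_mulVec, Pi.add_apply, Pi.smul_apply, Pi.smul_apply, hWx,
    smul_zero, add_zero, Pi.smul_apply, smul_eq_mul, smul_eq_mul] at hm
  exact hm.symm

theorem stmt16_general (n : ℕ) (hn : 0 < n) (z : Fin n → ℂ) (hz : ∀ k, ‖z k‖ = 1)
    (W : Matrix (Fin n) (Fin n) ℂ) (hW : W.IsHermitian) (σ : ℝ) (hσ : 0 ≤ σ) (m : Fin n)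
    (Wm : Matrix (Fin n) (Fin n) ℂ)
    (hWmdef : ∀ i j, Wm i j = if i = m ∨ j = m then 0 else W i j)
    (xt : Fin n → ℂ) (lam : ℝ)
    (heig : (outer z + σ • Wm).mulVec xt = (lam : ℂ) • xt)
    (hmax : ∀ ν : ℝ, (∃ v : Fin n → ℂ, v ≠ 0 ∧ (outer z + σ • Wm).mulVec v = (ν : ℂ) • v) →
      ν ≤ lam)
    (hnorm : l2norm xt = Real.sqrt n)
    (hgap : σ * opNorm Wm < n) :
    ‖xt m‖ ≤ n / (n - σ * opNorm Wm) := by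
  have hgap' : 0 < (n : ℝ) - σ * opNorm Wm := sub_pos.2 hgap
  have hlam : (n : ℝ) - σ * opNorm Wm ≤ lam :=
    sub_mul_opNorm_le_of_forall_eigenvalue_le hn hz hσ (hW.of_apply_eq_ite hWmdef) hmax
  have hlam_pos : 0 < lam := hgap'.trans_le hlam
  have hentry : lam * ‖xt m‖ ≤ n := by
    have h := congrArg norm
      (mul_apply_eq_herm_mul_of_row_eq_zero (m := m) (fun j => by simp [hWmdef m j]) heig)
    rw [norm_mul, norm_mul, Complex.norm_real, Real.norm_of_nonneg hlam_pos.le, hz m,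
      mul_one] at h
    calc lam * ‖xt m‖ = ‖herm z xt‖ := h
      _ ≤ l2norm z * l2norm xt := norm_herm_le z xt
      _ = n := by rw [l2norm_of_norm_eq_one hz, hnorm, Real.mul_self_sqrt n.cast_nonneg]
  calc ‖xt m‖ ≤ n / lam := by rw [le_div_iff₀ hlam_pos]; linarith
    _ ≤ n / (n - σ * opNorm Wm) := div_le_div_of_nonneg_left n.cast_nonneg hgap' hlam

/-- bound for the `m`-th entry of the leading eigenvector of
`C⁽ᵐ⁾ = zz* + σ W⁽ᵐ⁾`, where `W⁽ᵐ⁾` is `W` with its `m`-th row and column zeroed. -/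
theorem stmt16 (n : ℕ) (hn : 0 < n) (z : Fin n → ℂ) (hz : ∀ k, ‖z k‖ = 1)
    (W : Matrix (Fin n) (Fin n) ℂ) (hW : W.IsHermitian) (σ : ℝ) (hσ : 0 ≤ σ) (m : Fin n)
    (Wm : Matrix (Fin n) (Fin n) ℂ)
    (hWmdef : ∀ i j, Wm i j = if i = m ∨ j = m then 0 else W i j)
    (xt : Fin n → ℂ) (lam : ℝ)
    (heig : (outer z + σ • Wm).mulVec xt = (lam : ℂ) • xt)
    (hxt : xt ≠ 0)
    (hmax : ∀ ν : ℝ, (∃ v : Fin n → ℂ, v ≠ 0 ∧ (outer z + σ • Wm).mulVec v = (ν : ℂ) • v) →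
      ν ≤ lam)
    (hnorm : l2norm xt = Real.sqrt n)
    (hgap : σ * opNorm Wm < n) :
    ‖xt m‖ ≤ n / (n - σ * opNorm Wm) :=
  stmt16_general n hn z hz W hW σ hσ m Wm hWmdef xt lam heig hmax hnorm hgap

end PhaseSync
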